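/- arXiv:1706.08845 — 5 statements merged into one kernel-verified Lean document; each statement's English description precedes it below -/
import Mathlib

section
/- For a (p,q)-leaper with p < q on a (p+q)×(p+q) chessboard, every square in the central (q−p)×(q−p) subboard has degree zero in the leaper graph, and every other square has degree exactly two. -/
/-- A move of a `(p, q)`-leaper joins squares `a` and `b` when the difference is
`(±p, ±q)` or `(±q, ±p)`. -/
def IsLeaperMove (p q : ℤ) (a b : ℤ × ℤ) : Prop :=
  (|b.1 - a.1| = p ∧ |b.2 - a.2| = q) ∨ (|b.1 - a.1| = q ∧ |b.2 - a.2| = p)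

/-- The `(p+q) × (p+q)` chessboard. -/
def bigBoard (p q : ℤ) : Set (ℤ × ℤ) :=
  {a | 0 ≤ a.1 ∧ a.1 < p + q ∧ 0 ≤ a.2 ∧ a.2 < p + q}

/-- The central `(q-p) × (q-p)` subboard. -/
def centralBoard (p q : ℤ) : Set (ℤ × ℤ) :=
  {a | p ≤ a.1 ∧ a.1 < q ∧ p ≤ a.2 ∧ a.2 < q}

lemma leaper_mem_iff (p q x y u v : ℤ) (hp : 0 ≤ p) (hq : 0 ≤ q) :
    ((u, v) ∈ bigBoard p q ∧ IsLeaperMove p q (x, y) (u, v)) ↔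
    (0 ≤ u ∧ u < p + q ∧ 0 ≤ v ∧ v < p + q ∧
      (((u - x = p ∨ u - x = -p) ∧ (v - y = q ∨ v - y = -q)) ∨
       ((u - x = q ∨ u - x = -q) ∧ (v - y = p ∨ v - y = -p)))) := by
  simp only [bigBoard, IsLeaperMove, Set.mem_setOf_eq, abs_eq hp, abs_eq hq]
  omega

theorem leaper_degree_on_big_board (p q : ℤ) (hp : 0 ≤ p) (hpq : p < q)
    (a : ℤ × ℤ) (ha : a ∈ bigBoard p q) :
    (a ∈ centralBoard p q →
      Set.ncard {b | b ∈ bigBoard p q ∧ IsLeaperMove p q a b} = 0) ∧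
    (a ∉ centralBoard p q →
      Set.ncard {b | b ∈ bigBoard p q ∧ IsLeaperMove p q a b} = 2) := by
  obtain ⟨x, y⟩ := a
  simp only [bigBoard, Set.mem_setOf_eq] at ha
  obtain ⟨hx0, hxn, hy0, hyn⟩ := ha
  have hq : 0 ≤ q := by omega
  constructor
  · intro hc
    simp only [centralBoard, Set.mem_setOf_eq] at hc
    have : {b | b ∈ bigBoard p q ∧ IsLeaperMove p q (x, y) b} = ∅ := by
      ext ⟨u, v⟩
      rw [Set.mem_setOf_eq, leaper_mem_iff p q x y u v hp hq]
      simp only [Set.mem_empty_iff_false, iff_false]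
      omega
    rw [this, Set.ncard_empty]
  · intro hnc
    simp only [centralBoard, Set.mem_setOf_eq] at hnc
    have key : ∃ c d : ℤ × ℤ, c ≠ d ∧
        {b | b ∈ bigBoard p q ∧ IsLeaperMove p q (x, y) b} = {c, d} := by
      rcases lt_or_ge x p with hxA | hxB <;> rcases lt_or_ge y p with hyA | hyB
      · -- (A, A)
        refine ⟨(x + p, y + q), (x + q, y + p), by simp [Prod.ext_iff]; omega, ?_⟩
        ext ⟨u, v⟩
        rw [Set.mem_setOf_eq, leaper_mem_iff p q x y u v hp hq]
        simp only [Set.mem_insert_iff, Set.mem_singleton_iff, Prod.mk.injEq]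
        omega
      · rcases lt_or_ge y q with hyB' | hyC
        · -- (A, B)
          refine ⟨(x + q, y + p), (x + q, y - p), by simp [Prod.ext_iff]; omega, ?_⟩
          ext ⟨u, v⟩
          rw [Set.mem_setOf_eq, leaper_mem_iff p q x y u v hp hq]
          simp only [Set.mem_insert_iff, Set.mem_singleton_iff, Prod.mk.injEq]
          omega
        · -- (A, C)
          refine ⟨(x + p, y - q), (x + q, y - p), by simp [Prod.ext_iff]; omega, ?_⟩
          ext ⟨u, v⟩
          rw [Set.mem_setOf_eq, leaper_mem_iff p q x y u v hp hq]
          simp only [Set.mem_insert_iff, Set.mem_singleton_iff, Prod.mk.injEq]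
          omega
      · rcases lt_or_ge x q with hxB' | hxC
        · -- (B, A)
          refine ⟨(x + p, y + q), (x - p, y + q), by simp [Prod.ext_iff]; omega, ?_⟩
          ext ⟨u, v⟩
          rw [Set.mem_setOf_eq, leaper_mem_iff p q x y u v hp hq]
          simp only [Set.mem_insert_iff, Set.mem_singleton_iff, Prod.mk.injEq]
          omega
        · -- (C, A)
          refine ⟨(x - p, y + q), (x - q, y + p), by simp [Prod.ext_iff]; omega, ?_⟩
          ext ⟨u, v⟩
          rw [Set.mem_setOf_eq, leaper_mem_iff p q x y u v hp hq]
          simp only [Set.mem_insert_iff, Set.mem_singleton_iff, Prod.mk.injEq]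
          omega
      · rcases lt_or_ge x q with hxB' | hxC <;> rcases lt_or_ge y q with hyB' | hyC
        · -- (B, B): contradicts hnc
          exact absurd ⟨hxB, hxB', hyB, hyB'⟩ hnc
        · -- (B, C)
          refine ⟨(x + p, y - q), (x - p, y - q), by simp [Prod.ext_iff]; omega, ?_⟩
          ext ⟨u, v⟩
          rw [Set.mem_setOf_eq, leaper_mem_iff p q x y u v hp hq]
          simp only [Set.mem_insert_iff, Set.mem_singleton_iff, Prod.mk.injEq]
          omega
        · -- (C, B)
          refine ⟨(x - q, y + p), (x - q, y - p), by simp [Prod.ext_iff]; omega, ?_⟩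
          ext ⟨u, v⟩
          rw [Set.mem_setOf_eq, leaper_mem_iff p q x y u v hp hq]
          simp only [Set.mem_insert_iff, Set.mem_singleton_iff, Prod.mk.injEq]
          omega
        · -- (C, C)
          refine ⟨(x - p, y - q), (x - q, y - p), by simp [Prod.ext_iff]; omega, ?_⟩
          ext ⟨u, v⟩
          rw [Set.mem_setOf_eq, leaper_mem_iff p q x y u v hp hq]
          simp only [Set.mem_insert_iff, Set.mem_singleton_iff, Prod.mk.injEq]
          omega
    obtain ⟨c, d, hne, hS⟩ := key
    rw [hS, Set.ncard_pair hne]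
end

section
/- A nonnegative rational number q/p with p and q relatively prime possesses a finite even continued fraction representation [c₁±, c₂±, …, c_k] (where all cᵢ are even integers, c₁ ≥ 0 and cᵢ > 0 for i ≥ 2) if and only if p + q is odd. -/
/-- The value of the even continued fraction `c ± 1/(d₁ ± 1/( ⋯ ))`, where the
tail is the list of pairs (sign, term); `true` stands for `+`. -/
def ecfVal : ℤ → List (Bool × ℤ) → ℚ
  | c, [] => (c : ℚ)
  | c, (ε, d) :: t => (c : ℚ) + (if ε then 1 else -1) / ecfVal d t

/-!
Tails with terms `≥ 2` have value `> 1`, in particular nonzero. Hence a step `v ↦ c ± 1/v`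
with `c` even sends a quotient `n / m` of integers of opposite parity to `(c n ± m) / n`,
again of opposite parity, and a reduced fraction `q / p` of that form has `p + q` odd.

Conversely, if `p + q` is odd, let `c` be an even integer nearest to `q / p`. The remainder
`r = |q - c p|` is at most `p`, and `p + r ≡ p + q` is odd, so `r < p`; moreover `r` is prime
to `p` and `q / p = c ± 1 / (p / r)`, so one recurses on `p / r`.
-/

theorem one_lt_ecfVal {c : ℤ} {t : List (Bool × ℤ)} (hc : 2 ≤ c) (ht : ∀ x ∈ t, 2 ≤ x.2) :
    1 < ecfVal c t := by
  induction t generalizing c with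
  | nil => simp only [ecfVal]; exact_mod_cast hc.trans_lt' one_lt_two
  | cons x t ih =>
    obtain ⟨ε, d⟩ := x
    have hv : 1 < ecfVal d t := ih (ht _ List.mem_cons_self) fun y hy ↦ ht y (.tail _ hy)
    have hinv : 0 < 1 / ecfVal d t ∧ 1 / ecfVal d t < 1 :=
      ⟨by positivity, (div_lt_one (by positivity)).2 hv⟩
    have hc' : (2 : ℚ) ≤ c := by exact_mod_cast hc
    cases ε <;> simp only [ecfVal, Bool.false_eq_true, if_false, if_true, neg_div] <;> linarith

def OppositeParityQuot (v : ℚ) : Prop :=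
  ∃ n m : ℤ, m ≠ 0 ∧ Odd (n + m) ∧ v = n / m

namespace OppositeParityQuot

theorem of_even {c : ℤ} (hc : Even c) : OppositeParityQuot c :=
  ⟨c, 1, one_ne_zero, hc.add_one, by simp⟩

theorem even_add_odd_div {v : ℚ} (hv : OppositeParityQuot v) (hv0 : v ≠ 0) {c s : ℤ}
    (hc : Even c) (hs : Odd s) : OppositeParityQuot (c + s / v) := by
  obtain ⟨n, m, hm, hodd, rfl⟩ := hv
  have hn : (n : ℚ) ≠ 0 := by rintro h; simp [h] at hv0
  refine ⟨c * n + s * m, n, by exact_mod_cast hn, ?_, by push_cast; field_simp⟩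
  rw [show c * n + s * m + n = (n + m) + (c * n + (s - 1) * m) by ring]
  exact hodd.add_even ((hc.mul_right n).add ((hs.sub_odd odd_one).mul_right m))

theorem odd_add_of_isCoprime {p q : ℤ} (h : OppositeParityQuot (q / p)) (hp : p ≠ 0)
    (hco : IsCoprime p q) : Odd (q + p) := by
  obtain ⟨n, m, hm, hodd, hqp⟩ := h
  have hcross : q * m = n * p := by
    rw [div_eq_div_iff (by exact_mod_cast hp) (by exact_mod_cast hm)] at hqp
    exact_mod_cast hqp
  obtain ⟨k, rfl⟩ : p ∣ m := hco.dvd_of_dvd_mul_left ⟨n, by rw [hcross, mul_comm]⟩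
  have hn : n = q * k := by
    apply mul_right_cancel₀ hp
    linear_combination -hcross
  rw [hn, ← add_mul] at hodd
  exact Int.Odd.of_mul_left hodd

end OppositeParityQuot

open OppositeParityQuot in
theorem oppositeParityQuot_ecfVal {c : ℤ} {t : List (Bool × ℤ)} (hc : Even c)
    (ht : ∀ x ∈ t, Even x.2 ∧ 0 < x.2) : OppositeParityQuot (ecfVal c t) := by
  induction t generalizing c with
  | nil => exact of_even hc
  | cons x t ih =>
    obtain ⟨ε, d⟩ := x
    have hd := ht _ List.mem_cons_self
    have ht' : ∀ y ∈ t, Even y.2 ∧ 0 < y.2 := fun y hy ↦ ht y (.tail _ hy)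
    have hv1 : 1 < ecfVal d t := one_lt_ecfVal ((Int.two_le_iff_pos_of_even hd.1).2 hd.2)
      fun y hy ↦ (Int.two_le_iff_pos_of_even (ht' y hy).1).2 (ht' y hy).2
    have hv0 : ecfVal d t ≠ 0 := (one_pos.trans hv1).ne'
    cases ε
    · simpa [ecfVal] using (ih hd.1 ht').even_add_odd_div hv0 hc (s := -1) (by decide)
    · simpa [ecfVal] using (ih hd.1 ht').even_add_odd_div hv0 hc (s := 1) odd_one

theorem exists_even_abs_sub_mul_lt {a b : ℤ} (ha : 0 ≤ a) (hb : 0 < b) (hodd : Odd (a + b)) :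
    ∃ c, Even c ∧ 0 ≤ c ∧ (b < a → 0 < c) ∧ |a - c * b| < b := by
  set k := (a + b) / (2 * b)
  have hlo : 2 * k * b ≤ a + b := by
    linarith [Int.ediv_mul_le (a + b) (b := 2 * b) (by positivity)]
  have hhi : a + b < 2 * k * b + 2 * b := by
    linarith [Int.lt_ediv_add_one_mul_self (a + b) (b := 2 * b) (by positivity)]
  have hk : 0 ≤ k := Int.ediv_nonneg (by positivity) (by positivity)
  have hne : a - 2 * k * b ≠ -b := by
    intro h
    rw [show a + b = 2 * (k * b) by linear_combination h] at hodd
    exact Int.not_even_iff_odd.2 hodd (even_two_mul _)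
  refine ⟨2 * k, even_two_mul k, by positivity, fun hab ↦ ?_, abs_lt.2 ⟨?_, ?_⟩⟩
  · nlinarith
  · exact lt_of_le_of_ne (by linarith) (Ne.symm hne)
  · linarith

theorem exists_ecfVal_eq_div {a b : ℤ} (ha : 0 ≤ a) (hb : 0 < b) (hco : IsCoprime a b)
    (hodd : Odd (a + b)) :
    ∃ (c : ℤ) (t : List (Bool × ℤ)), Even c ∧ 0 ≤ c ∧ (b < a → 0 < c) ∧
      (∀ x ∈ t, Even x.2 ∧ 0 < x.2) ∧ ecfVal c t = a / b := by
  obtain ⟨c, hc, hc0, hcpos, hlt⟩ := exists_even_abs_sub_mul_lt ha hb hodd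
  have hbQ : (b : ℚ) ≠ 0 := by exact_mod_cast hb.ne'
  rcases eq_or_ne (a - c * b) 0 with hr0 | hr0
  · refine ⟨c, [], hc, hc0, hcpos, by simp, ?_⟩
    rw [ecfVal, eq_div_iff hbQ]
    exact_mod_cast (sub_eq_zero.1 hr0).symm
  have hco' : IsCoprime b |a - c * b| := by
    have h := hco.symm.add_mul_right_right (-c)
    rw [neg_mul, ← sub_eq_add_neg] at h
    rcases abs_choice (a - c * b) with h' | h' <;> rw [h']
    exacts [h, h.neg_right]
  have hodd' : Odd (b + |a - c * b|) := by
    rw [Int.odd_add, even_abs, ← Int.odd_add, show b + (a - c * b) = a + b - c * b by ring]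
    exact hodd.sub_even (hc.mul_right b)
  obtain ⟨d, t, hd, -, hdpos, ht, hval⟩ :=
    exists_ecfVal_eq_div hb.le (abs_pos.2 hr0) hco' hodd'
  refine ⟨c, (decide (0 < a - c * b), d) :: t, hc, hc0, hcpos, ?_, ?_⟩
  · rintro x (_ | ⟨_, hx⟩)
    exacts [⟨hd, hdpos hlt⟩, ht x hx]
  · rw [ecfVal, hval, eq_div_iff hbQ]
    rcases hr0.lt_or_gt with h | h
    · have : ¬ 0 < a - c * b := h.not_gt
      simp only [this, decide_false, Bool.false_eq_true, if_false, abs_of_neg h]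
      push_cast
      field_simp
      ring
    · simp only [h, decide_true, if_true, abs_of_pos h]
      push_cast
      field_simp
      ring
termination_by b.toNat
decreasing_by omega

theorem even_continued_fraction_exists_iff (p q : ℕ) (hp : 0 < p)
    (hco : Nat.Coprime p q) :
    (∃ (c : ℤ) (t : List (Bool × ℤ)),
        Even c ∧ 0 ≤ c ∧ (∀ x ∈ t, Even x.2 ∧ 0 < x.2) ∧
        ecfVal c t = (q : ℚ) / (p : ℚ)) ↔ Odd (p + q) := by
  have hco' : IsCoprime (p : ℤ) q := Nat.isCoprime_iff_coprime.2 hco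
  constructor
  · rintro ⟨c, t, hc, -, ht, hval⟩
    have hquot : OppositeParityQuot ((q : ℤ) / (p : ℤ)) := by
      simpa only [Int.cast_natCast, hval] using oppositeParityQuot_ecfVal hc ht
    rw [add_comm]
    exact_mod_cast hquot.odd_add_of_isCoprime (by exact_mod_cast hp.ne') hco'
  · intro hodd
    obtain ⟨c, t, hc, hc0, -, ht, hval⟩ :=
      exists_ecfVal_eq_div (Int.natCast_nonneg q) (by exact_mod_cast hp) hco'.symm
        (by rw [add_comm]; exact_mod_cast hodd)
    exact ⟨c, t, hc, hc0, ht, by simpa only [Int.cast_natCast] using hval⟩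
end

section
/- Every pair (p,q) of relatively prime positive integers with p < q and p + q odd and (p,q) ≠ (1,2) arises from a unique smaller such pair (m,n) via exactly one of the three maps F(m,n) = (m, 2m+n), G(m,n) = (n, 2n−m), H(m,n) = (n, m+2n), where (m,n) satisfies m < n, gcd(m,n) = 1, and m + n odd. -/
/-- A pair `(p, q)` of proportions of a skew basic leaper (written with `p < q`):
positive, coprime, of odd sum. -/
def GoodPair (pq : ℕ × ℕ) : Prop :=
  0 < pq.1 ∧ pq.1 < pq.2 ∧ Nat.Coprime pq.1 pq.2 ∧ Odd (pq.1 + pq.2)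

/-- The three lifting maps on proportions: `F (m,n) = (m, 2m+n)`,
`G (m,n) = (n, 2n−m)`, `H (m,n) = (n, m+2n)`. -/
def liftMap (i : Fin 3) (mn : ℕ × ℕ) : ℕ × ℕ :=
  if i = 0 then (mn.1, 2 * mn.1 + mn.2)
  else if i = 1 then (mn.2, 2 * mn.2 - mn.1)
  else (mn.2, mn.1 + 2 * mn.2)

lemma coprime_F {p q : ℕ} (h : Nat.Coprime p q) (hq : 2*p ≤ q) :
    Nat.Coprime p (q - 2*p) := by
  have h2 : q - 2*p + 2 * p = q := by omega
  rw [← Nat.coprime_add_mul_right_right p (q - 2*p) 2, h2]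
  exact h

lemma coprime_G {p q : ℕ} (h : Nat.Coprime p q) (hq : q ≤ 2*p) :
    Nat.Coprime (2*p - q) p := by
  rw [Nat.coprime_comm]
  rw [← Nat.isCoprime_iff_coprime] at h ⊢
  have h2 : ((2*p - q : ℕ) : ℤ) = -(q:ℤ) + (p:ℤ) * 2 := by omega
  rw [h2]
  exact h.neg_right.add_mul_left_right 2

theorem lift_exists_unique (pq : ℕ × ℕ) (h : GoodPair pq) (hne : pq ≠ (1, 2)) :
    ∃! x : (ℕ × ℕ) × Fin 3,
      GoodPair x.1 ∧ x.1.1 + x.1.2 < pq.1 + pq.2 ∧ liftMap x.2 x.1 = pq := by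
  obtain ⟨p, q⟩ := pq
  obtain ⟨hp, hpq, hco, hodd⟩ := h
  simp only [Nat.odd_iff] at hp hpq hco hodd
  have h2 : q ≠ 2 * p := by
    intro hq
    have hp1 : p = 1 := hco.eq_one_of_dvd ⟨2, by omega⟩
    exact hne (by simp only [Prod.mk.injEq]; omega)
  have h3 : q ≠ 3 * p := by
    intro hq
    have hp1 : p = 1 := hco.eq_one_of_dvd ⟨3, by omega⟩
    omega
  have key : ∀ y : (ℕ × ℕ) × Fin 3,
      (GoodPair y.1 ∧ y.1.1 + y.1.2 < p + q ∧ liftMap y.2 y.1 = (p, q)) →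
      (3 * p < q ∧ y = ((p, q - 2*p), 0)) ∨
      (q < 2 * p ∧ y = ((2*p - q, p), 1)) ∨
      (2 * p < q ∧ q < 3 * p ∧ y = ((q - 2*p, p), 2)) := by
    rintro ⟨⟨m, n⟩, i⟩ ⟨⟨hm, hmn, hcmn, hog⟩, hsum, hlift⟩
    simp only [Nat.odd_iff] at hm hmn hcmn hog hsum
    fin_cases i <;>
      simp [liftMap, Prod.ext_iff, Fin.ext_iff] at hlift <;>
      [left; (right; left); (right; right)] <;>
      simp only [Prod.ext_iff, Fin.ext_iff] <;>
      refine ⟨by omega, ?_⟩ <;> simp <;> omega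
  rcases Nat.lt_trichotomy q (2*p) with hc | hc | hc
  · -- q < 2p : G
    have hcG : Nat.Coprime (2*p - q) p := coprime_G hco (by omega)
    refine ⟨((2*p - q, p), 1), ⟨⟨show 0 < 2*p - q by omega, show 2*p - q < p by omega,
      hcG, by rw [Nat.odd_iff]; show (2*p - q + p) % 2 = 1; omega⟩,
      show 2*p - q + p < p + q by omega, by simp [liftMap, Prod.ext_iff]; omega⟩,
      fun y hy => ?_⟩
    rcases key y hy with ⟨h', _⟩ | ⟨_, h'⟩ | ⟨h', _, _⟩ <;> [omega; exact h'; omega]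
  · exact absurd hc h2
  · rcases Nat.lt_trichotomy q (3*p) with hc3 | hc3 | hc3
    · -- 2p < q < 3p : H
      have hcop : Nat.Coprime (q - 2*p) p := by
        rw [Nat.coprime_comm]; exact coprime_F hco (by omega)
      refine ⟨((q - 2*p, p), 2), ⟨⟨show 0 < q - 2*p by omega, show q - 2*p < p by omega,
        hcop, by rw [Nat.odd_iff]; show (q - 2*p + p) % 2 = 1; omega⟩,
        show q - 2*p + p < p + q by omega, by simp [liftMap, Prod.ext_iff]; omega⟩,
        fun y hy => ?_⟩
      rcases key y hy with ⟨h', _⟩ | ⟨h', _⟩ | ⟨_, _, h'⟩ <;> [omega; omega; exact h']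
    · exact absurd hc3 h3
    · -- q > 3p : F
      have hcF : Nat.Coprime p (q - 2*p) := coprime_F hco (by omega)
      refine ⟨((p, q - 2*p), 0), ⟨⟨show 0 < p by omega, show p < q - 2*p by omega,
        hcF, by rw [Nat.odd_iff]; show (p + (q - 2*p)) % 2 = 1; omega⟩,
        show p + (q - 2*p) < p + q by omega, by simp [liftMap, Prod.ext_iff]; omega⟩,
        fun y hy => ?_⟩
      rcases key y hy with ⟨_, h'⟩ | ⟨h', _⟩ | ⟨_, h', _⟩ <;> [exact h'; omega; omega]
end

section
/- The map from finite strings over the alphabet {f, g, h} to pairs (p,q) of coprime positive integers with p < q and p + q odd, defined by starting from (1,2) and successively applying the maps F(m,n) = (m, 2m+n), G(m,n) = (n, 2n−m), H(m,n) = (n, m+2n) (reading the string right to left), is a bijection. -/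
/-- Read a string over `{f, g, h}` right to left, starting from `(1, 2)`. -/
def descend (e : List (Fin 3)) : ℕ × ℕ := e.foldr liftMap (1, 2)

lemma good_iff {p q : ℕ} :
    GoodPair (p, q) ↔ 0 < p ∧ p < q ∧ Nat.gcd p q = 1 ∧ (p + q) % 2 = 1 := by
  unfold GoodPair Nat.Coprime
  rw [Nat.odd_iff]

lemma gcd_one_of {a b : ℕ} {g : ℕ} (h : Nat.gcd a b = 1) (hda : g ∣ a) (hdb : g ∣ b) :
    g = 1 :=
  Nat.dvd_one.mp (h ▸ Nat.dvd_gcd hda hdb)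

lemma descend_cons (i : Fin 3) (e : List (Fin 3)) :
    descend (i :: e) = liftMap i (descend e) := rfl

lemma good_liftMap (i : Fin 3) {mn : ℕ × ℕ} (h : GoodPair mn) : GoodPair (liftMap i mn) := by
  obtain ⟨m, n⟩ := mn
  rw [good_iff] at h
  obtain ⟨h1, h2, h3, h4⟩ := h
  unfold liftMap
  split_ifs
  · rw [good_iff]
    refine ⟨by omega, by omega, ?_, by omega⟩
    refine gcd_one_of h3 (Nat.gcd_dvd_left _ _) ?_
    have hd : Nat.gcd m (2 * m + n) ∣ (2 * m + n) - 2 * m :=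
      Nat.dvd_sub (Nat.gcd_dvd_right _ _) ((Nat.gcd_dvd_left _ _).mul_left 2)
    simpa using hd
  · rw [good_iff]
    refine ⟨by omega, by omega, ?_, by omega⟩
    have hd : Nat.gcd n (2 * n - m) ∣ 2 * n - (2 * n - m) :=
      Nat.dvd_sub ((Nat.gcd_dvd_left _ _).mul_left 2) (Nat.gcd_dvd_right _ _)
    have he : 2 * n - (2 * n - m) = m := by omega
    rw [he] at hd
    exact gcd_one_of (Nat.gcd_comm m n ▸ h3) hd (Nat.gcd_dvd_left _ _)
  · rw [good_iff]
    refine ⟨by omega, by omega, ?_, by omega⟩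
    have hd : Nat.gcd n (m + 2 * n) ∣ (m + 2 * n) - 2 * n :=
      Nat.dvd_sub (Nat.gcd_dvd_right _ _) ((Nat.gcd_dvd_left _ _).mul_left 2)
    have he : (m + 2 * n) - 2 * n = m := by omega
    rw [he] at hd
    exact gcd_one_of (Nat.gcd_comm m n ▸ h3) hd (Nat.gcd_dvd_left _ _)

lemma good_descend (e : List (Fin 3)) : GoodPair (descend e) := by
  induction e with
  | nil => exact good_iff.mpr (by norm_num)
  | cons i e ih => rw [descend_cons]; exact good_liftMap i ih

/-- decoding map -/
def back (pq : ℕ × ℕ) : Fin 3 × (ℕ × ℕ) :=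
  if 3 * pq.1 < pq.2 then (0, (pq.1, pq.2 - 2 * pq.1))
  else if pq.2 < 2 * pq.1 then (1, (2 * pq.1 - pq.2, pq.1))
  else (2, (pq.2 - 2 * pq.1, pq.1))

lemma back_def (p q : ℕ) :
    back (p, q) = if 3 * p < q then ((0 : Fin 3), (p, q - 2 * p))
      else if q < 2 * p then (1, (2 * p - q, p)) else (2, (q - 2 * p, p)) := rfl

lemma back_liftMap (i : Fin 3) {mn : ℕ × ℕ} (h : GoodPair mn) :
    back (liftMap i mn) = (i, mn) := by
  obtain ⟨m, n⟩ := mn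
  rw [good_iff] at h
  obtain ⟨h1, h2, _, _⟩ := h
  unfold liftMap
  split_ifs with hi0 hi1
  · subst hi0
    rw [back_def, if_pos (by omega)]
    have : 2 * m + n - 2 * m = n := by omega
    rw [this]
  · subst hi1
    rw [back_def, if_neg (by omega), if_pos (by omega)]
    have : 2 * n - (2 * n - m) = m := by omega
    rw [this]
  · have hi2 : i = 2 := by omega
    subst hi2
    rw [back_def, if_neg (by omega), if_neg (by omega)]
    have : m + 2 * n - 2 * n = m := by omega
    rw [this]

lemma descend_ne_base (i : Fin 3) (e : List (Fin 3)) : descend (i :: e) ≠ (1, 2) := by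
  have h := good_descend e
  rcases hmn : descend e with ⟨m, n⟩
  rw [hmn, good_iff] at h
  obtain ⟨h1, h2, _, _⟩ := h
  rw [descend_cons, hmn]
  unfold liftMap
  split_ifs <;> intro h' <;> rw [Prod.mk.injEq] at h' <;> omega

lemma descend_inj : ∀ e e' : List (Fin 3), descend e = descend e' → e = e'
  | [], [], _ => rfl
  | [], i :: e', h => absurd h.symm (descend_ne_base i e')
  | i :: e, [], h => absurd h (descend_ne_base i e)
  | i :: e, j :: e', h => by
      have h1 := back_liftMap i (good_descend e)
      have h2 := back_liftMap j (good_descend e')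
      rw [descend_cons, descend_cons] at h
      rw [h] at h1
      have h3 := h2.symm.trans h1
      have hij : j = i := congrArg Prod.fst h3
      have hee : descend e' = descend e := congrArg Prod.snd h3
      rw [hij, descend_inj e e' hee.symm]

lemma descend_surj : ∀ q p : ℕ, GoodPair (p, q) → ∃ e, descend e = (p, q) := by
  intro q
  induction q using Nat.strong_induction_on with
  | _ q ih =>
    intro p hp
    rw [good_iff] at hp
    obtain ⟨h1, h2, h3, h4⟩ := hp
    by_cases hbase : p = 1 ∧ q = 2
    · exact ⟨[], by simp [descend, hbase.1, hbase.2]⟩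
    have hne2 : q ≠ 2 * p := by
      intro hq
      have : Nat.gcd p q = p := Nat.gcd_eq_left ⟨2, by omega⟩
      omega
    have hne3 : q ≠ 3 * p := by
      intro hq
      have : Nat.gcd p q = p := Nat.gcd_eq_left ⟨3, by omega⟩
      omega
    rcases lt_trichotomy q (2 * p) with hq | hq | hq
    · -- G case: predecessor (2p - q, p)
      have hcop : Nat.gcd (2 * p - q) p = 1 := by
        have hd : Nat.gcd (2 * p - q) p ∣ 2 * p - (2 * p - q) :=
          Nat.dvd_sub ((Nat.gcd_dvd_right _ _).mul_left 2) (Nat.gcd_dvd_left _ _)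
        have he : 2 * p - (2 * p - q) = q := by omega
        rw [he] at hd
        exact gcd_one_of h3 (Nat.gcd_dvd_right _ _) hd
      obtain ⟨e, he⟩ := ih p h2 (2 * p - q) (good_iff.mpr ⟨by omega, by omega, hcop, by omega⟩)
      refine ⟨1 :: e, ?_⟩
      rw [descend_cons, he]
      unfold liftMap
      rw [if_neg (by decide), if_pos rfl]
      show ((p : ℕ), 2 * p - (2 * p - q)) = (p, q)
      rw [Prod.mk.injEq]
      omega
    · omega
    · rcases lt_trichotomy q (3 * p) with hq3 | hq3 | hq3
      · -- H case: predecessor (q - 2p, p)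
        have hcop : Nat.gcd (q - 2 * p) p = 1 := by
          have hd : Nat.gcd (q - 2 * p) p ∣ (q - 2 * p) + 2 * p :=
            Nat.dvd_add (Nat.gcd_dvd_left _ _) ((Nat.gcd_dvd_right _ _).mul_left 2)
          have he : (q - 2 * p) + 2 * p = q := by omega
          rw [he] at hd
          exact gcd_one_of h3 (Nat.gcd_dvd_right _ _) hd
        obtain ⟨e, he⟩ := ih p h2 (q - 2 * p) (good_iff.mpr ⟨by omega, by omega, hcop, by omega⟩)
        refine ⟨2 :: e, ?_⟩
        rw [descend_cons, he]
        unfold liftMap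
        rw [if_neg (by decide), if_neg (by decide)]
        show ((p : ℕ), (q - 2 * p) + 2 * p) = (p, q)
        rw [Prod.mk.injEq]
        omega
      · omega
      · -- F case: predecessor (p, q - 2p)
        have hcop : Nat.gcd p (q - 2 * p) = 1 := by
          have hd : Nat.gcd p (q - 2 * p) ∣ (q - 2 * p) + 2 * p :=
            Nat.dvd_add (Nat.gcd_dvd_right _ _) ((Nat.gcd_dvd_left _ _).mul_left 2)
          have he : (q - 2 * p) + 2 * p = q := by omega
          rw [he] at hd
          exact gcd_one_of h3 (Nat.gcd_dvd_left _ _) hd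
        obtain ⟨e, he⟩ := ih (q - 2 * p) (by omega) p
          (good_iff.mpr ⟨by omega, by omega, hcop, by omega⟩)
        refine ⟨0 :: e, ?_⟩
        rw [descend_cons, he]
        unfold liftMap
        rw [if_pos rfl]
        show ((p : ℕ), 2 * p + (q - 2 * p)) = (p, q)
        rw [Prod.mk.injEq]
        omega

theorem descend_bijective :
    Set.BijOn descend Set.univ {pq : ℕ × ℕ | GoodPair pq} := by
  refine ⟨fun e _ => good_descend e, fun e _ e' _ h => descend_inj e e' h, fun pq hpq => ?_⟩
  obtain ⟨e, he⟩ := descend_surj pq.2 pq.1 (by simpa using hpq)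
  exact ⟨e, Set.mem_univ e, by simpa using he⟩
end

section
/- Each of the three matrices A_f = [[1,0],[2,1]], A_g = [[0,1],[−1,2]], A_h = [[0,1],[1,2]] has determinant ±1, and each maps the set of column vectors (r,s)ᵀ with 0 < r < s, gcd(r,s) = 1, and r + s odd into itself, additionally with the property that the image (p,q)ᵀ satisfies p + q > r + s. -/
def Af : Matrix (Fin 2) (Fin 2) ℤ := !![1, 0; 2, 1]
def Ag : Matrix (Fin 2) (Fin 2) ℤ := !![0, 1; -1, 2]
def Ah : Matrix (Fin 2) (Fin 2) ℤ := !![0, 1; 1, 2]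

/-!
A matrix with unit determinant maps a coprime pair to a coprime pair, since a Bézout relation for
`v` transports along `A⁻¹` to one for `A *ᵥ v`. Explicitly the three images of `(r, s)` are
`(r, 2r + s)`, `(s, 2s - r)` and `(s, r + 2s)`; their coordinate sums exceed `r + s` by
`2r`, `2(s - r)` and `2s`, positive even numbers, which gives both the parity and the growth.
-/

open Matrix

theorem IsCoprime.mulVec_of_isUnit_det {R : Type*} [CommRing R] {A : Matrix (Fin 2) (Fin 2) R}
    (hA : IsUnit A.det) {v : Fin 2 → R} (hv : IsCoprime (v 0) (v 1)) :
    IsCoprime ((A *ᵥ v) 0) ((A *ᵥ v) 1) := by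
  obtain ⟨a, b, hab⟩ := hv
  set w := ![a, b] ᵥ* A⁻¹
  have hw : w ⬝ᵥ (A *ᵥ v) = ![a, b] ⬝ᵥ v := by
    rw [dotProduct_mulVec, vecMul_vecMul, nonsing_inv_mul _ hA, vecMul_one]
  refine ⟨w 0, w 1, ?_⟩
  simpa [dotProduct, Fin.sum_univ_two, hab] using hw

theorem Af_mulVec (r s : ℤ) : Af *ᵥ ![r, s] = ![r, 2 * r + s] := by
  ext i; fin_cases i <;> simp [Af, mulVec, dotProduct]

theorem Ag_mulVec (r s : ℤ) : Ag *ᵥ ![r, s] = ![s, 2 * s - r] := by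
  ext i; fin_cases i <;> simp [Ag, mulVec, dotProduct]; ring

theorem Ah_mulVec (r s : ℤ) : Ah *ᵥ ![r, s] = ![s, r + 2 * s] := by
  ext i; fin_cases i <;> simp [Ah, mulVec, dotProduct]

theorem det_Af : Af.det = 1 := by simp [Af, det_fin_two]

theorem det_Ag : Ag.det = 1 := by simp [Ag, det_fin_two]

theorem det_Ah : Ah.det = -1 := by simp [Ah, det_fin_two]

theorem lift_properties_of_mulVec_eq {A : Matrix (Fin 2) (Fin 2) ℤ} (hA : IsUnit A.det)
    {r s p q k : ℤ} (hAv : A *ᵥ ![r, s] = ![p, q]) (hsum : p + q = r + s + 2 * k)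
    (hp : 0 < p) (hpq : p < q) (hk : 0 < k) (hc : IsCoprime r s) (hodd : Odd (r + s)) :
    0 < A.mulVec ![r, s] 0 ∧
    A.mulVec ![r, s] 0 < A.mulVec ![r, s] 1 ∧
    IsCoprime (A.mulVec ![r, s] 0) (A.mulVec ![r, s] 1) ∧
    Odd (A.mulVec ![r, s] 0 + A.mulVec ![r, s] 1) ∧
    r + s < A.mulVec ![r, s] 0 + A.mulVec ![r, s] 1 := by
  have hcop := hc.mulVec_of_isUnit_det (v := ![r, s]) hA
  simp only [hAv, cons_val_zero, cons_val_one] at hcop ⊢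
  exact ⟨hp, hpq, hcop, hsum ▸ hodd.add_even (even_two_mul k), by omega⟩

theorem lift_matrices_properties :
    ∀ A ∈ ({Af, Ag, Ah} : Set (Matrix (Fin 2) (Fin 2) ℤ)),
      (A.det = 1 ∨ A.det = -1) ∧
      ∀ r s : ℤ, 0 < r → r < s → IsCoprime r s → Odd (r + s) →
        0 < A.mulVec ![r, s] 0 ∧
        A.mulVec ![r, s] 0 < A.mulVec ![r, s] 1 ∧
        IsCoprime (A.mulVec ![r, s] 0) (A.mulVec ![r, s] 1) ∧
        Odd (A.mulVec ![r, s] 0 + A.mulVec ![r, s] 1) ∧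
        r + s < A.mulVec ![r, s] 0 + A.mulVec ![r, s] 1 := by
  rintro A (rfl | rfl | rfl)
  · refine ⟨.inl det_Af, fun r s hr hrs hc hodd => ?_⟩
    exact lift_properties_of_mulVec_eq (by simp [det_Af]) (Af_mulVec r s) (k := r) (by ring)
      hr (by omega) hr hc hodd
  · refine ⟨.inl det_Ag, fun r s hr hrs hc hodd => ?_⟩
    exact lift_properties_of_mulVec_eq (by simp [det_Ag]) (Ag_mulVec r s) (k := s - r) (by ring)
      (by omega) (by omega) (by omega) hc hodd
  · refine ⟨.inr det_Ah, fun r s hr hrs hc hodd => ?_⟩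
    exact lift_properties_of_mulVec_eq (by simp [det_Ah]) (Ah_mulVec r s) (k := s) (by ring)
      (by omega) (by omega) (by omega) hc hodd
end
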